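/- Let (P_n) be defined by the three-term recurrence q^{2n+ν+1}P_{n+1}(λ) - q^{2n}(1+q^{2ν})P_n(λ) + q^{2n+ν-1}P_{n-1}(λ) = λP_n(λ) with P_{-1}=0, P_0=1. Then for every solution f of Δ_{q,ν}f = λf on ℝ_q one has f(q^{-n}) = q^{n(ν+1)}[f(1)P_n(λ) - q^{ν+1}f(q)Q_n(λ)] for all n ≥ 0, where (Q_n) satisfies the same recurrence with Q_{-1}=-1, Q_0=0. -/
import Mathlib


open scoped BigOperators

noncomputable def qDeltaR (q ν : ℝ) (f : ℝ → ℝ) (x : ℝ) : ℝ :=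
  (f (x / q) - (1 + q ^ (2 * ν)) * f x + q ^ (2 * ν) * f (q * x)) / x ^ 2

theorem stmt9 (q ν lam : ℝ) (hq0 : 0 < q) (hq1 : q < 1) (hν : -1 < ν)
    (P Q : ℤ → ℝ)
    (hPinit : P (-1) = 0 ∧ P 0 = 1) (hQinit : Q (-1) = -1 ∧ Q 0 = 0)
    (hPrec : ∀ n : ℕ, q ^ (2 * (n : ℝ) + ν + 1) * P ((n : ℤ) + 1)
        - q ^ (2 * (n : ℝ)) * (1 + q ^ (2 * ν)) * P (n : ℤ)
        + q ^ (2 * (n : ℝ) + ν - 1) * P ((n : ℤ) - 1) = lam * P (n : ℤ))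
    (hQrec : ∀ n : ℕ, q ^ (2 * (n : ℝ) + ν + 1) * Q ((n : ℤ) + 1)
        - q ^ (2 * (n : ℝ)) * (1 + q ^ (2 * ν)) * Q (n : ℤ)
        + q ^ (2 * (n : ℝ) + ν - 1) * Q ((n : ℤ) - 1) = lam * Q (n : ℤ))
    (f : ℝ → ℝ)
    (hf : ∀ k : ℤ, qDeltaR q ν f (q ^ k) = lam * f (q ^ k)) :
    ∀ n : ℕ, f (q ^ (-(n : ℤ))) =
      q ^ ((n : ℝ) * (ν + 1)) * (f 1 * P (n : ℤ) - q ^ (ν + 1) * f q * Q (n : ℤ)) := by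
  obtain ⟨hPm, hP0⟩ := hPinit
  obtain ⟨hQm, hQ0⟩ := hQinit
  have hqne : q ≠ 0 := ne_of_gt hq0
  set c := q ^ (ν + 1) with hc
  have hcpos : 0 < c := Real.rpow_pos_of_pos hq0 _
  have hcne : c ≠ 0 := ne_of_gt hcpos
  have hc2 : c ^ 2 = q ^ (2 * ν) * q ^ 2 := by
    rw [hc, ← Real.rpow_natCast (q ^ (ν + 1)) 2, ← Real.rpow_mul hq0.le,
      ← Real.rpow_natCast q 2, ← Real.rpow_add hq0]
    norm_num
    ring_nf
  have hb : q ^ (2 * ν) = c ^ 2 / q ^ 2 := by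
    rw [hc2]; field_simp
  have hcn : ∀ n : ℕ, q ^ ((n : ℝ) * (ν + 1)) = c ^ n := by
    intro n
    rw [hc, ← Real.rpow_natCast (q ^ (ν + 1)) n, ← Real.rpow_mul hq0.le, mul_comm]
  have h2n : ∀ n : ℕ, q ^ (2 * (n : ℝ)) = (q ^ n) ^ 2 := by
    intro n
    rw [← Real.rpow_natCast q n, ← Real.rpow_natCast (q ^ ((n : ℕ) : ℝ)) 2,
      ← Real.rpow_mul hq0.le]
    norm_num [mul_comm]
  have hA : ∀ n : ℕ, q ^ (2 * (n : ℝ) + ν + 1) = (q ^ n) ^ 2 * c := by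
    intro n
    rw [show 2 * (n : ℝ) + ν + 1 = 2 * (n : ℝ) + (ν + 1) by ring, Real.rpow_add hq0, h2n, hc]
  have hB : ∀ n : ℕ, q ^ (2 * (n : ℝ) + ν - 1) = (q ^ n) ^ 2 * c / q ^ 2 := by
    intro n
    rw [show 2 * (n : ℝ) + ν - 1 = (2 * (n : ℝ) + ν + 1) - 2 by ring, Real.rpow_sub hq0, hA,
      show (2 : ℝ) = ((2 : ℕ) : ℝ) by norm_num, Real.rpow_natCast]
  have hPrec' : ∀ n : ℕ, (q ^ n) ^ 2 * c * P ((n : ℤ) + 1)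
      - (q ^ n) ^ 2 * (1 + c ^ 2 / q ^ 2) * P (n : ℤ)
      + (q ^ n) ^ 2 * c / q ^ 2 * P ((n : ℤ) - 1) = lam * P (n : ℤ) := by
    intro n
    have h := hPrec n
    rw [hA, hB, h2n, hb] at h
    exact h
  have hQrec' : ∀ n : ℕ, (q ^ n) ^ 2 * c * Q ((n : ℤ) + 1)
      - (q ^ n) ^ 2 * (1 + c ^ 2 / q ^ 2) * Q (n : ℤ)
      + (q ^ n) ^ 2 * c / q ^ 2 * Q ((n : ℤ) - 1) = lam * Q (n : ℤ) := by
    intro n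
    have h := hQrec n
    rw [hA, hB, h2n, hb] at h
    exact h
  have hXe : ∀ n : ℕ, q ^ (-(n : ℤ) - 1) = (q ^ n * q)⁻¹ := by
    intro n
    rw [show -(n : ℤ) - 1 = -((n : ℤ) + 1) by ring, zpow_neg, zpow_add₀ hqne, zpow_one,
      zpow_natCast]
  have hfn : ∀ n : ℕ, (q ^ n * q) ^ 2 * f (q ^ (-(n : ℤ) - 2)) =
      (lam + (1 + c ^ 2 / q ^ 2) * (q ^ n * q) ^ 2) * f (q ^ (-(n : ℤ) - 1))
        - c ^ 2 / q ^ 2 * (q ^ n * q) ^ 2 * f (q ^ (-(n : ℤ))) := by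
    intro n
    have h := hf (-(n : ℤ) - 1)
    simp only [qDeltaR] at h
    rw [hb] at h
    have e1 : q ^ (-(n : ℤ) - 1) / q = q ^ (-(n : ℤ) - 2) := by
      rw [show -(n : ℤ) - 2 = (-(n : ℤ) - 1) + (-1) by ring, zpow_add₀ hqne, zpow_neg_one,
        div_eq_mul_inv]
    have e2 : q * q ^ (-(n : ℤ) - 1) = q ^ (-(n : ℤ)) := by
      nth_rewrite 1 [← zpow_one q]
      rw [← zpow_add₀ hqne]
      congr 1
      ring
    rw [e1, e2, div_eq_iff (by positivity)] at h
    have hXX : (q ^ (-(n : ℤ) - 1)) ^ 2 * (q ^ n * q) ^ 2 = 1 := by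
      rw [hXe n]
      field_simp
    linear_combination (q ^ n * q) ^ 2 * h + lam * f (q ^ (-(n : ℤ) - 1)) * hXX
  suffices H : ∀ n : ℕ, f (q ^ (-(n : ℤ))) = c ^ n * (f 1 * P (n : ℤ) - c * f q * Q (n : ℤ)) ∧
      f (q ^ (-(n : ℤ) - 1)) = c ^ (n + 1) * (f 1 * P ((n : ℤ) + 1) - c * f q * Q ((n : ℤ) + 1)) by
    intro n
    rw [hcn n]
    exact (H n).1
  intro n
  induction n with
  | zero =>
    constructor
    · norm_num [hP0, hQ0]
    · have h0 := hf 0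
      simp only [qDeltaR] at h0
      rw [hb, zpow_zero, mul_one, one_pow, div_one] at h0
      rw [one_div] at h0
      have hP' := hPrec' 0
      have hQ' := hQrec' 0
      norm_num [hP0, hPm, hQ0, hQm] at hP' hQ'
      norm_num
      linear_combination h0 - f 1 * hP' + c * f q * hQ'
  | succ n ih =>
    obtain ⟨ih0, ih1⟩ := ih
    have ecast : -(((n + 1 : ℕ) : ℤ)) = -(n : ℤ) - 1 := by push_cast; ring
    constructor
    · rw [ecast, show ((n + 1 : ℕ) : ℤ) = (n : ℤ) + 1 by push_cast; ring]
      exact ih1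
    · rw [ecast, show -(n : ℤ) - 1 - 1 = -(n : ℤ) - 2 by ring,
        show ((n + 1 : ℕ) : ℤ) + 1 = (n : ℤ) + 1 + 1 by push_cast; ring]
      have hP2 := hPrec' (n + 1)
      have hQ2 := hQrec' (n + 1)
      rw [show ((n + 1 : ℕ) : ℤ) = (n : ℤ) + 1 by push_cast; ring,
        show (n : ℤ) + 1 - 1 = (n : ℤ) by ring] at hP2 hQ2
      have hune : ((q ^ n * q) ^ 2 : ℝ) ≠ 0 := by positivity
      refine mul_left_cancel₀ hune ?_
      linear_combination hfn n + (lam + (1 + c ^ 2 / q ^ 2) * (q ^ n * q) ^ 2) * ih1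
        - (c ^ 2 / q ^ 2 * (q ^ n * q) ^ 2) * ih0
        - (c ^ (n + 1) * f 1) * hP2
        + (c ^ (n + 2) * f q) * hQ2
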